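/- arXiv:1305.2377 — 2 statements merged into one kernel-verified Lean document; each statement's English description precedes it below -/
import Mathlib

section
/- Let ᾱ: B → Out_D(L) be a coupling, α: B → Der_D(L) a lift, and ρ ∈ Ω_B²(L) with ad_ρ = F_α (a lifting pair). Then λ = d_α ρ ∈ Ω_B³(L) takes values in the center Z(L) of L. -/
/-- The order-preserving inclusion `Fin (n-1) → Fin n` skipping the index `j`. -/
def skipIdx {n : ℕ} (j : Fin n) (m : Fin (n - 1)) : Fin n :=
  if (m : ℕ) < (j : ℕ) then ⟨m, by have := m.isLt; omega⟩
  else ⟨(m : ℕ) + 1, by have := m.isLt; omega⟩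

/-- The Chevalley–Eilenberg/de Rham differential of an `M`-valued `p`-form on a Lie
algebroid `B`, twisted by a connection `α : B → (M → M)`. -/
def dform {B M : Type*} [LieRing B] [AddCommGroup M]
    (α : B → M → M) (p : ℕ) (ξ : (Fin p → B) → M) :
    (Fin (p + 1) → B) → M :=
  fun s =>
    (∑ i : Fin (p + 1), ((-1 : ℤ) ^ (i : ℕ)) • α (s i) (ξ (s ∘ i.succAbove))) +
      ∑ i : Fin (p + 1), ∑ j : Fin p,
        if (i : ℕ) ≤ (j : ℕ) then
          ((-1 : ℤ) ^ ((i : ℕ) + (j : ℕ) + 1)) •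
            ξ (fun m : Fin p =>
              if hm : (m : ℕ) = 0 then ⁅s i, s (i.succAbove j)⁆
              else s (i.succAbove (skipIdx j ⟨(m : ℕ) - 1, by have := m.isLt; omega⟩)))
        else 0

/-! The adjoint map `ad : L → End L` turns each derivation `α b` into the commutator `⁅α b, -⁆`,
so `ad ∘ d_α ρ = d_{⁅α, -⁆} (ad ∘ ρ) = d_{⁅α, -⁆} F_α`. This vanishes by the Bianchi identity,
which for an additive `α` with values in any Lie ring is just the Jacobi identity there and in `B`. -/

theorem dform_two_apply {B M : Type*} [LieRing B] [AddCommGroup M]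
    (α : B → M → M) (ξ : (Fin 2 → B) → M) (s : Fin 3 → B) :
    dform α 2 ξ s = α (s 0) (ξ ![s 1, s 2]) - α (s 1) (ξ ![s 0, s 2]) + α (s 2) (ξ ![s 0, s 1])
      - ξ ![⁅s 0, s 1⁆, s 2] + ξ ![⁅s 0, s 2⁆, s 1] - ξ ![⁅s 1, s 2⁆, s 0] := by
  simp only [dform, Fin.sum_univ_succ, Fin.sum_univ_zero, Function.comp_def]
  norm_num [sub_eq_add_neg, add_assoc]
  congr! 12 <;> rename_i m <;> fin_cases m <;> rfl

theorem map_dform {B M N F : Type*} [LieRing B] [AddCommGroup M] [AddCommGroup N]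
    [FunLike F M N] [AddMonoidHomClass F M N] (φ : F) {α : B → M → M} {β : B → N → N}
    (hφ : ∀ b m, φ (α b m) = β b (φ m)) (p : ℕ) (ξ : (Fin p → B) → M) (s : Fin (p + 1) → B) :
    φ (dform α p ξ s) = dform β p (φ ∘ ξ) s := by
  simp only [dform, map_add, map_sum, map_zsmul, hφ, apply_ite φ, map_zero, Function.comp_apply]

section Curvature

variable {B A : Type*} [LieRing B] [LieRing A]

def curvature (α : B →+ A) (v : Fin 2 → B) : A :=
  ⁅α (v 0), α (v 1)⁆ - α ⁅v 0, v 1⁆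

theorem dform_curvature_eq_zero (α : B →+ A) (s : Fin 3 → B) :
    dform (fun b a => ⁅α b, a⁆) 2 (curvature α) s = 0 := by
  have jacobiB : α ⁅⁅s 1, s 2⁆, s 0⁆ = α ⁅⁅s 0, s 2⁆, s 1⁆ - α ⁅⁅s 0, s 1⁆, s 2⁆ := by
    rw [← map_sub, ← lie_skew ⁅s 1, s 2⁆, leibniz_lie (s 0), ← lie_skew (s 1) ⁅s 0, s 2⁆]
    abel_nf
  have jacobiA := leibniz_lie (α (s 0)) (α (s 1)) (α (s 2))
  simp only [dform_two_apply, curvature, Matrix.cons_val_zero, Matrix.cons_val_one, lie_sub, jacobiB]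
  rw [jacobiA, ← lie_skew (α (s 2)) ⁅α (s 0), α (s 1)⁆, ← lie_skew (α ⁅s 0, s 1⁆),
    ← lie_skew (α ⁅s 0, s 2⁆), ← lie_skew (α ⁅s 1, s 2⁆)]
  abel

end Curvature

section OfAssociative

attribute [local instance] LieRing.ofAssociativeRing

theorem lie_ad_eq_ad_of_isDerivation {R L : Type*} [CommRing R] [LieRing L] [LieAlgebra R L]
    {D : Module.End R L} (hD : ∀ x y, D ⁅x, y⁆ = ⁅D x, y⁆ + ⁅x, D y⁆) (x : L) :
    ⁅D, LieAlgebra.ad R L x⁆ = LieAlgebra.ad R L (D x) := by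
  ext y
  simp [Ring.lie_def, hD]

end OfAssociative

theorem lifting_pair_dρ_central_general
    {k : Type*} [Field k] {R : Type*} [CommRing R]
    {B : Type*} [LieRing B] [Module R B]
    {L : Type*} [LieRing L] [LieAlgebra k L] [LieAlgebra R L]
    (α : B → L →ₗ[k] L)
    (hadd : ∀ b b' : B, α (b + b') = α b + α b')
    (hD : ∀ (b : B) (l l' : L), α b ⁅l, l'⁆ = ⁅α b l, l'⁆ + ⁅l, α b l'⁆)
    (ρ : B [⋀^Fin 2]→ₗ[R] L)
    (hF : ∀ (b₁ b₂ : B) (l : L),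
      α b₁ (α b₂ l) - α b₂ (α b₁ l) - α ⁅b₁, b₂⁆ l = ⁅ρ ![b₁, b₂], l⁆) :
    ∀ (s : Fin 3 → B) (l : L), ⁅dform (fun b x => α b x) 2 ⇑ρ s, l⁆ = 0 := by
  intro s l
  let _ : LieRing (Module.End k L) := LieRing.ofAssociativeRing
  let αₕ : B →+ Module.End k L := AddMonoidHom.mk' α hadd
  have ad_ρ : LieAlgebra.ad k L ∘ ρ = curvature αₕ := by
    funext v
    ext l'
    rw [← FinVec.etaExpand_eq v]
    exact (hF (v 0) (v 1) l').symm
  have ad_dρ : LieAlgebra.ad k L (dform (fun b x => α b x) 2 ρ s) = 0 := by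
    rw [map_dform (LieAlgebra.ad k L) (β := fun b a => ⁅αₕ b, a⁆)
      (fun b x => (lie_ad_eq_ad_of_isDerivation (hD b) x).symm), ad_ρ, dform_curvature_eq_zero]
  simpa using LinearMap.congr_fun ad_dρ l

/-- Let `(α, ρ)` be a lifting pair of a coupling `ᾱ : B → Out_D(L)`:
`α : B → Der_D(L)` is an `R`-linear lift of `ᾱ` (a `B`-connection on `L` by bracket
derivations) and `ρ ∈ Ω_B²(L)` satisfies `ad_ρ = F_α`.  Then `λ = d_α ρ ∈ Ω_B³(L)`
takes values in the center `Z(L)` of `L`. -/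
theorem lifting_pair_dρ_central
    {k : Type*} [Field k] {R : Type*} [CommRing R] [Algebra k R]
    {B : Type*} [LieRing B] [LieAlgebra k B] [Module R B] [IsScalarTower k R B]
    {L : Type*} [LieRing L] [LieAlgebra k L] [LieAlgebra R L] [IsScalarTower k R L]
    (a : B →ₗ[R] Derivation k R R)
    (hLeibB : ∀ (s t : B) (f : R), ⁅s, f • t⁆ = f • ⁅s, t⁆ + a s f • t)
    (α : B → L →ₗ[k] L)
    (hadd : ∀ b b' : B, α (b + b') = α b + α b')
    (hsmul : ∀ (f : R) (b : B) (l : L), α (f • b) l = f • α b l)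
    (hD : ∀ (b : B) (l l' : L), α b ⁅l, l'⁆ = ⁅α b l, l'⁆ + ⁅l, α b l'⁆)
    (hLeibα : ∀ (b : B) (f : R) (l : L), α b (f • l) = f • α b l + a b f • l)
    (ρ : B [⋀^Fin 2]→ₗ[R] L)
    (hF : ∀ (b₁ b₂ : B) (l : L),
      α b₁ (α b₂ l) - α b₂ (α b₁ l) - α ⁅b₁, b₂⁆ l = ⁅ρ ![b₁, b₂], l⁆) :
    ∀ (s : Fin 3 → B) (l : L), ⁅dform (fun b x => α b x) 2 ⇑ρ s, l⁆ = 0 :=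
  lifting_pair_dρ_central_general α hadd hD ρ hF
end

section
/- Let (α,ρ) and (α,ρ') be two lifting pairs of ᾱ with the same connection α. Then ρ' − ρ takes values in the center Z(L), and the associated cocycles differ by a coboundary: d_α ρ' − d_α ρ = d_{ᾱ}(ρ' − ρ). Hence the obstruction class [d_α ρ] ∈ H³(B; Z(L)) is independent of ρ. -/
/-!
Both `ρ` and `ρ'` realise the curvature of `α` through the adjoint action, so `ad (ρ' − ρ) = 0`.
The differential `d_α` only involves `α b` applied to values of the form and sums of values of
the form, so it is additive in the form, which gives `d_α ρ' − d_α ρ = d_α (ρ' − ρ)`.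
-/

theorem lie_sub_eq_zero_of_forall_lie_eq {B L : Type*} [LieRing L] {f g : (Fin 2 → B) → L}
    (h : ∀ (b₁ b₂ : B) (l : L), ⁅f ![b₁, b₂], l⁆ = ⁅g ![b₁, b₂], l⁆) (v : Fin 2 → B) (l : L) :
    ⁅g v - f v, l⁆ = 0 := by
  rw [show v = ![v 0, v 1] from (FinVec.etaExpand_eq v).symm, sub_lie, h, sub_self]

theorem dform_sub {B M : Type*} [LieRing B] [AddCommGroup M] (α : B → M →+ M) (p : ℕ)
    (ξ ξ' : (Fin p → B) → M) (s : Fin (p + 1) → B) :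
    dform (fun b x => α b x) p (fun v => ξ v - ξ' v) s
      = dform (fun b x => α b x) p ξ s - dform (fun b x => α b x) p ξ' s := by
  have ite_sub_zero (c : Prop) [Decidable c] (x y : M) :
      (if c then x - y else 0) = (if c then x else 0) - (if c then y else 0) := by
    rw [ite_sub_ite, sub_zero]
  simp only [dform, map_sub, smul_sub, ite_sub_zero, Finset.sum_sub_distrib]
  abel

theorem lifting_pair_same_connection_general
    {k : Type*} [Field k] {R : Type*} [CommRing R]
    {B : Type*} [LieRing B] [Module R B]
    {L : Type*} [LieRing L] [LieAlgebra k L] [LieAlgebra R L]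
    (α : B → L →ₗ[k] L)
    (ρ : B [⋀^Fin 2]→ₗ[R] L)
    (hF : ∀ (b₁ b₂ : B) (l : L),
      α b₁ (α b₂ l) - α b₂ (α b₁ l) - α ⁅b₁, b₂⁆ l = ⁅ρ ![b₁, b₂], l⁆)
    (ρ' : B [⋀^Fin 2]→ₗ[R] L)
    (hF' : ∀ (b₁ b₂ : B) (l : L),
      α b₁ (α b₂ l) - α b₂ (α b₁ l) - α ⁅b₁, b₂⁆ l = ⁅ρ' ![b₁, b₂], l⁆) :
    -- `ρ' − ρ` is central-valued
    (∀ (v : Fin 2 → B) (l : L), ⁅ρ' v - ρ v, l⁆ = 0) ∧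
    -- the two cocycles differ by the coboundary of the central 2-form `ρ' − ρ`
    (∀ s : Fin 3 → B,
      dform (fun b x => α b x) 2 ⇑ρ' s - dform (fun b x => α b x) 2 ⇑ρ s
        = dform (fun b x => α b x) 2 (fun v : Fin 2 → B => ρ' v - ρ v) s) := by
  refine ⟨lie_sub_eq_zero_of_forall_lie_eq fun b₁ b₂ l => (hF b₁ b₂ l).symm.trans (hF' b₁ b₂ l),
    fun s => ?_⟩
  exact (dform_sub (fun b => (α b).toAddMonoidHom) 2 ⇑ρ' ⇑ρ s).symm

/-- Let `(α, ρ)` and `(α, ρ')` be two lifting pairs of the coupling `ᾱ`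
with the same connection `α`.  Then `ρ' − ρ` takes values in the center `Z(L)`, and
the associated cocycles differ by the coboundary of the central-valued form `ρ' − ρ`:
`d_α ρ' − d_α ρ = d_ᾱ(ρ' − ρ)`.  Hence the obstruction class `[d_α ρ] ∈ H³(B; Z(L))`
does not depend on `ρ`. -/
theorem lifting_pair_same_connection
    {k : Type*} [Field k] {R : Type*} [CommRing R] [Algebra k R]
    {B : Type*} [LieRing B] [LieAlgebra k B] [Module R B] [IsScalarTower k R B]
    {L : Type*} [LieRing L] [LieAlgebra k L] [LieAlgebra R L] [IsScalarTower k R L]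
    (a : B →ₗ[R] Derivation k R R)
    (hLeibB : ∀ (s t : B) (f : R), ⁅s, f • t⁆ = f • ⁅s, t⁆ + a s f • t)
    (α : B → L →ₗ[k] L)
    (hadd : ∀ b b' : B, α (b + b') = α b + α b')
    (hsmul : ∀ (f : R) (b : B) (l : L), α (f • b) l = f • α b l)
    (hD : ∀ (b : B) (l l' : L), α b ⁅l, l'⁆ = ⁅α b l, l'⁆ + ⁅l, α b l'⁆)
    (hLeibα : ∀ (b : B) (f : R) (l : L), α b (f • l) = f • α b l + a b f • l)
    (ρ : B [⋀^Fin 2]→ₗ[R] L)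
    (hF : ∀ (b₁ b₂ : B) (l : L),
      α b₁ (α b₂ l) - α b₂ (α b₁ l) - α ⁅b₁, b₂⁆ l = ⁅ρ ![b₁, b₂], l⁆)
    (ρ' : B [⋀^Fin 2]→ₗ[R] L)
    (hF' : ∀ (b₁ b₂ : B) (l : L),
      α b₁ (α b₂ l) - α b₂ (α b₁ l) - α ⁅b₁, b₂⁆ l = ⁅ρ' ![b₁, b₂], l⁆) :
    -- `ρ' − ρ` is central-valued
    (∀ (v : Fin 2 → B) (l : L), ⁅ρ' v - ρ v, l⁆ = 0) ∧
    -- the two cocycles differ by the coboundary of the central 2-form `ρ' − ρ`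
    (∀ s : Fin 3 → B,
      dform (fun b x => α b x) 2 ⇑ρ' s - dform (fun b x => α b x) 2 ⇑ρ s
        = dform (fun b x => α b x) 2 (fun v : Fin 2 → B => ρ' v - ρ v) s) :=
  lifting_pair_same_connection_general α ρ hF ρ' hF'
end
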